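/- arXiv:2601.06832 — 2 statements merged into one kernel-verified Lean document; each statement's English description precedes it below -/
import Mathlib

section
/- Let d ≥ 1 be an integer and let α be a real number with 1 < α < 2. Then the integral ∫_{ℝ^d} (1 − cos z₁)/|z|^{d+α} dz (where z₁ is the first coordinate of z and |·| the Euclidean norm) is finite and equals π^{d/2}·|Γ(−α/2)| / (2^α · Γ((d+α)/2)), where Γ denotes the Gamma function. -/
open MeasureTheory Real
open scoped ENNReal

section LevyAux

open Set
open scoped RealInnerProductSpace

variable {d : ℕ}

private lemma levy_aux_re_eq (hd : 0 < d) (t : ℝ) (v : EuclideanSpace ℝ (Fin d)) :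
    RCLike.re (Complex.exp (-(t:ℂ) * (‖v‖:ℂ) ^ 2 +
        Complex.I * ((inner ℝ (EuclideanSpace.single (⟨0, hd⟩ : Fin d) (1:ℝ)) v : ℝ) : ℂ)))
      = Real.cos (v ⟨0, hd⟩) * Real.exp (-(‖v‖ ^ 2 * t)) := by
  have hinner : (inner ℝ (EuclideanSpace.single (⟨0, hd⟩ : Fin d) (1:ℝ)) v : ℝ) = v ⟨0, hd⟩ := by
    simp [EuclideanSpace.inner_single_left]
  rw [hinner, RCLike.re_to_complex, Complex.exp_re]
  have h1 : (-(t:ℂ) * (‖v‖:ℂ) ^ 2 + Complex.I * ((v ⟨0, hd⟩ : ℝ) : ℂ)).re = -(‖v‖^2 * t) := by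
    simp [← Complex.ofReal_pow, mul_comm]
  have h2 : (-(t:ℂ) * (‖v‖:ℂ) ^ 2 + Complex.I * ((v ⟨0, hd⟩ : ℝ) : ℂ)).im = v ⟨0, hd⟩ := by
    simp [← Complex.ofReal_pow]
  rw [h1, h2, mul_comm]

private lemma levy_aux_integrable_gauss (hd : 0 < d) {t : ℝ} (ht : 0 < t) :
    Integrable (fun v : EuclideanSpace ℝ (Fin d) =>
      (1 - Real.cos (v ⟨0, hd⟩)) * Real.exp (-(‖v‖ ^ 2 * t))) := by
  have hb : (0:ℝ) < ((t : ℂ)).re := by simpa using ht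
  have h1 : Integrable (fun v : EuclideanSpace ℝ (Fin d) =>
      Real.exp (-(‖v‖ ^ 2 * t))) := by
    have := (GaussianFourier.integrable_cexp_neg_mul_sq_norm_add (V := EuclideanSpace ℝ (Fin d))
      hb 0 0).re
    refine this.congr (Filter.Eventually.of_forall fun v => ?_)
    simp [Complex.exp_re, ← Complex.ofReal_pow, mul_comm]
  have h2 : Integrable (fun v : EuclideanSpace ℝ (Fin d) =>
      Real.cos (v ⟨0, hd⟩) * Real.exp (-(‖v‖ ^ 2 * t))) := by
    have := (GaussianFourier.integrable_cexp_neg_mul_sq_norm_add (V := EuclideanSpace ℝ (Fin d))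
      hb Complex.I (EuclideanSpace.single ⟨0, hd⟩ (1:ℝ))).re
    exact this.congr (Filter.Eventually.of_forall fun v => levy_aux_re_eq hd t v)
  have h := h1.sub h2
  refine h.congr (Filter.Eventually.of_forall fun v => ?_)
  simp only [Pi.sub_apply]
  ring

private lemma levy_aux_gauss_value (hd : 0 < d) {t : ℝ} (ht : 0 < t) :
    ∫ v : EuclideanSpace ℝ (Fin d),
        (1 - Real.cos (v ⟨0, hd⟩)) * Real.exp (-(‖v‖ ^ 2 * t))
      = (π / t) ^ ((d:ℝ) / 2) * (1 - Real.exp (-(1 / (4 * t)))) := by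
  have hb : (0:ℝ) < ((t : ℂ)).re := by simpa using ht
  have h1 : (∫ v : EuclideanSpace ℝ (Fin d), Real.exp (-(‖v‖ ^ 2 * t)))
      = (π / t) ^ ((d:ℝ) / 2) := by
    have := GaussianFourier.integral_rexp_neg_mul_sq_norm (V := EuclideanSpace ℝ (Fin d)) ht
    rw [finrank_euclideanSpace_fin] at this
    rw [← this]
    congr 1 with v
    ring_nf
  have h2 : (∫ v : EuclideanSpace ℝ (Fin d), Real.cos (v ⟨0, hd⟩) * Real.exp (-(‖v‖ ^ 2 * t)))
      = (π / t) ^ ((d:ℝ) / 2) * Real.exp (-(1 / (4 * t))) := by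
    have hint := GaussianFourier.integrable_cexp_neg_mul_sq_norm_add
      (V := EuclideanSpace ℝ (Fin d)) hb Complex.I (EuclideanSpace.single ⟨0, hd⟩ (1:ℝ))
    have hval := GaussianFourier.integral_cexp_neg_mul_sq_norm_add
      (V := EuclideanSpace ℝ (Fin d)) hb Complex.I (EuclideanSpace.single ⟨0, hd⟩ (1:ℝ))
    have hre := integral_re hint
    rw [hval] at hre
    have hL : (∫ v : EuclideanSpace ℝ (Fin d), RCLike.re (Complex.exp (-(t:ℂ) * (‖v‖:ℂ) ^ 2 +
        Complex.I * ((inner ℝ (EuclideanSpace.single (⟨0, hd⟩ : Fin d) (1:ℝ)) v : ℝ) : ℂ))))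
        = ∫ v : EuclideanSpace ℝ (Fin d), Real.cos (v ⟨0, hd⟩) * Real.exp (-(‖v‖ ^ 2 * t)) :=
      integral_congr_ae (Filter.Eventually.of_forall fun v => levy_aux_re_eq hd t v)
    rw [hL] at hre
    rw [hre]
    have hπt : (0:ℝ) ≤ π / t := by positivity
    have hcast : ((π:ℂ) / (t:ℂ)) ^ ((Module.finrank ℝ (EuclideanSpace ℝ (Fin d)) : ℂ) / 2)
        = (((π / t) ^ ((d:ℝ)/2) : ℝ) : ℂ) := by
      rw [finrank_euclideanSpace_fin, Complex.ofReal_cpow hπt]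
      push_cast
      ring_nf
    have hnorm : ‖EuclideanSpace.single (⟨0, hd⟩ : Fin d) (1:ℝ)‖ = 1 := by
      simp [EuclideanSpace.norm_single]
    have hexp : Complex.exp (Complex.I ^ 2 *
          ((‖EuclideanSpace.single (⟨0, hd⟩ : Fin d) (1:ℝ)‖ : ℂ)) ^ 2 / (4 * (t:ℂ)))
        = ((Real.exp (-(1 / (4 * t))) : ℝ) : ℂ) := by
      rw [hnorm]
      rw [show Complex.I ^ 2 * ((1:ℝ):ℂ) ^ 2 / (4 * (t:ℂ)) = ((-(1/(4*t)) : ℝ) : ℂ) by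
        rw [Complex.I_sq]; push_cast; ring]
      rw [← Complex.ofReal_exp]
    rw [hcast, hexp, ← Complex.ofReal_mul]
    simp only [RCLike.re_to_complex, Complex.ofReal_re]
  have hi1 : Integrable (fun v : EuclideanSpace ℝ (Fin d) => Real.exp (-(‖v‖ ^ 2 * t))) := by
    have := (GaussianFourier.integrable_cexp_neg_mul_sq_norm_add (V := EuclideanSpace ℝ (Fin d))
      hb 0 0).re
    refine this.congr (Filter.Eventually.of_forall fun v => ?_)
    simp [Complex.exp_re, ← Complex.ofReal_pow, mul_comm]
  have hi2 : Integrable (fun v : EuclideanSpace ℝ (Fin d) =>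
      Real.cos (v ⟨0, hd⟩) * Real.exp (-(‖v‖ ^ 2 * t))) := by
    have := (GaussianFourier.integrable_cexp_neg_mul_sq_norm_add (V := EuclideanSpace ℝ (Fin d))
      hb Complex.I (EuclideanSpace.single ⟨0, hd⟩ (1:ℝ))).re
    exact this.congr (Filter.Eventually.of_forall fun v => levy_aux_re_eq hd t v)
  have hsplit : (∫ v : EuclideanSpace ℝ (Fin d),
      (1 - Real.cos (v ⟨0, hd⟩)) * Real.exp (-(‖v‖ ^ 2 * t)))
      = (∫ v : EuclideanSpace ℝ (Fin d), Real.exp (-(‖v‖ ^ 2 * t)))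
        - ∫ v : EuclideanSpace ℝ (Fin d), Real.cos (v ⟨0, hd⟩) * Real.exp (-(‖v‖ ^ 2 * t)) := by
    rw [← integral_sub hi1 hi2]
    congr 1 with v
    ring
  rw [hsplit, h1, h2]
  ring

private lemma levy_aux_integrableOn_gammaKernel {a r : ℝ} (ha : 0 < a) (hr : 0 < r) :
    IntegrableOn (fun t : ℝ => t ^ (a - 1) * Real.exp (-(r * t))) (Ioi 0) := by
  have h0 := Real.GammaIntegral_convergent ha
  have h1 : IntegrableOn (fun x : ℝ => Real.exp (-(r * x)) * (r * x) ^ (a - 1)) (Ioi 0) := by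
    have := (integrableOn_Ioi_comp_mul_left_iff
      (fun x : ℝ => Real.exp (-x) * x ^ (a - 1)) 0 hr).2
    simp only [mul_zero] at this
    exact this h0
  have h2 := h1.const_mul (r ^ (1 - a))
  refine h2.congr ((ae_restrict_iff' measurableSet_Ioi).2
    (Filter.Eventually.of_forall fun t ht => ?_))
  have ht' : (0:ℝ) < t := ht
  have hmul : (r * t) ^ (a - 1) = r ^ (a - 1) * t ^ (a - 1) := Real.mul_rpow hr.le ht'.le
  have hrr : r ^ (1 - a) * r ^ (a - 1) = 1 := by
    rw [← Real.rpow_add hr]; norm_num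
  calc r ^ (1 - a) * (Real.exp (-(r * t)) * (r * t) ^ (a - 1))
      = (r ^ (1 - a) * r ^ (a - 1)) * (Real.exp (-(r * t)) * t ^ (a - 1)) := by rw [hmul]; ring
    _ = t ^ (a - 1) * Real.exp (-(r * t)) := by rw [hrr]; ring

private lemma levy_aux_lintegral_gammaKernel {a r : ℝ} (ha : 0 < a) (hr : 0 < r) :
    ∫⁻ t in Ioi (0:ℝ), ENNReal.ofReal (t ^ (a - 1) * Real.exp (-(r * t)))
      = ENNReal.ofReal ((1 / r) ^ a * Real.Gamma a) := by
  rw [← integral_rpow_mul_exp_neg_mul_Ioi ha hr]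
  rw [ofReal_integral_eq_lintegral_ofReal (levy_aux_integrableOn_gammaKernel ha hr)]
  exact (ae_restrict_iff' measurableSet_Ioi).2 (Filter.Eventually.of_forall fun t ht => by
    have h : (0:ℝ) < t := ht
    positivity)

private lemma levy_aux_lintegral_rpow_Ioc {p c : ℝ} (hp : 0 < p) (hc : 0 < c) :
    ∫⁻ t in Ioc (0:ℝ) c, ENNReal.ofReal (t ^ (p - 1)) = ENNReal.ofReal (c ^ p / p) := by
  have hint : IntegrableOn (fun t : ℝ => t ^ (p - 1)) (Ioc 0 c) := by
    have := (intervalIntegral.intervalIntegrable_rpow' (a := 0) (b := c) (r := p - 1)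
      (by linarith))
    rwa [intervalIntegrable_iff_integrableOn_Ioc_of_le hc.le] at this
  have hval : ∫ t in Ioc (0:ℝ) c, t ^ (p - 1) = c ^ p / p := by
    rw [← intervalIntegral.integral_of_le hc.le]
    rw [integral_rpow (Or.inl (by linarith))]
    rw [Real.zero_rpow (by linarith : p - 1 + 1 ≠ 0)]
    norm_num
  rw [← hval, ofReal_integral_eq_lintegral_ofReal hint]
  exact (ae_restrict_iff' measurableSet_Ioc).2 (Filter.Eventually.of_forall fun t ht =>
    Real.rpow_nonneg ht.1.le _)

private lemma levy_aux_lintegral_exp_rpow {p : ℝ} (hp : p < 1) :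
    ∫⁻ v in Ioi (0:ℝ), ENNReal.ofReal (Real.exp (-v) * v ^ (-p))
      = ENNReal.ofReal (Real.Gamma (1 - p)) := by
  have h1 : (0:ℝ) < 1 - p := by linarith
  rw [Real.Gamma_eq_integral h1]
  rw [ofReal_integral_eq_lintegral_ofReal (Real.GammaIntegral_convergent h1)
    ((ae_restrict_iff' measurableSet_Ioi).2 (Filter.Eventually.of_forall fun v hv => by
      have : (0:ℝ) < v := hv
      positivity))]
  refine lintegral_congr fun v => ?_
  rw [show (1 : ℝ) - p - 1 = -p by ring]

private lemma levy_aux_ofReal_one_sub_exp {x : ℝ} (hx : 0 < x) :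
    ENNReal.ofReal (1 - Real.exp (-x))
      = ∫⁻ v in Ioc (0:ℝ) x, ENNReal.ofReal (Real.exp (-v)) := by
  have hval : ∫ v in Ioc (0:ℝ) x, Real.exp (-v) = 1 - Real.exp (-x) := by
    rw [← intervalIntegral.integral_of_le hx.le]
    rw [intervalIntegral.integral_comp_neg (fun v => Real.exp v)]
    rw [neg_zero, integral_exp, Real.exp_zero]
  have hint : IntegrableOn (fun v : ℝ => Real.exp (-v)) (Ioc 0 x) :=
    (Real.continuous_exp.comp continuous_neg).integrableOn_Ioc
  rw [← hval, ofReal_integral_eq_lintegral_ofReal hint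
    (Filter.Eventually.of_forall fun v => (Real.exp_pos _).le)]

private lemma levy_aux_K {p : ℝ} (hp0 : 0 < p) (hp1 : p < 1) :
    ∫⁻ t in Ioi (0:ℝ), ENNReal.ofReal (t ^ (p - 1) * (1 - Real.exp (-(1 / (4 * t)))))
      = ENNReal.ofReal ((1 / 4 : ℝ) ^ p / p * Real.Gamma (1 - p)) := by
  classical
  set S : Set (ℝ × ℝ) := {q : ℝ × ℝ | q.1 * q.2 ≤ 1 / 4} with hSdef
  have hS : MeasurableSet S := measurableSet_le (measurable_fst.mul measurable_snd)
    measurable_const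
  have hmemS : ∀ t v : ℝ, ((t, v) ∈ S ↔ t * v ≤ 1 / 4) := fun t v => Iff.rfl
  have key1 : ∀ t : ℝ, 0 < t → ∀ v : ℝ,
      ENNReal.ofReal (Real.exp (-v)) * S.indicator 1 (t, v)
        = (Iic (1 / (4 * t))).indicator (fun v => ENNReal.ofReal (Real.exp (-v))) v := by
    intro t ht v
    have hiff : (t, v) ∈ S ↔ v ∈ Iic (1 / (4 * t)) := by
      rw [hmemS, mem_Iic, mul_comm, ← le_div_iff₀ ht, div_div]
    by_cases h : (t, v) ∈ S
    · rw [Set.indicator_of_mem h, Set.indicator_of_mem (hiff.1 h)]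
      simp
    · rw [Set.indicator_of_notMem h, Set.indicator_of_notMem (fun hc => h (hiff.2 hc))]
      simp
  have key2 : ∀ v : ℝ, 0 < v → ∀ t : ℝ,
      ENNReal.ofReal (t ^ (p - 1)) * S.indicator 1 (t, v)
        = (Iic (1 / (4 * v))).indicator (fun t => ENNReal.ofReal (t ^ (p - 1))) t := by
    intro v hv t
    have hiff : (t, v) ∈ S ↔ t ∈ Iic (1 / (4 * v)) := by
      rw [hmemS, mem_Iic, ← le_div_iff₀ hv, div_div]
    by_cases h : (t, v) ∈ S
    · rw [Set.indicator_of_mem h, Set.indicator_of_mem (hiff.1 h)]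
      simp
    · rw [Set.indicator_of_notMem h, Set.indicator_of_notMem (fun hc => h (hiff.2 hc))]
      simp
  have step1 : ∫⁻ t in Ioi (0:ℝ), ENNReal.ofReal (t ^ (p - 1) * (1 - Real.exp (-(1 / (4 * t)))))
      = ∫⁻ t in Ioi (0:ℝ), ∫⁻ v in Ioi (0:ℝ),
          ENNReal.ofReal (t ^ (p - 1)) * (ENNReal.ofReal (Real.exp (-v)) *
            S.indicator 1 (t, v)) := by
    refine setLIntegral_congr_fun measurableSet_Ioi (fun t ht => ?_)
    have ht : (0:ℝ) < t := ht
    have hx : (0:ℝ) < 1 / (4 * t) := by positivity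
    rw [ENNReal.ofReal_mul (Real.rpow_nonneg ht.le _)]
    rw [levy_aux_ofReal_one_sub_exp hx]
    rw [lintegral_const_mul' _ _ ENNReal.ofReal_ne_top]
    congr 1
    rw [lintegral_congr (key1 t ht)]
    rw [lintegral_indicator measurableSet_Iic, Measure.restrict_restrict measurableSet_Iic]
    rw [Set.Iic_inter_Ioi]
  rw [step1]
  have hmeas : AEMeasurable (Function.uncurry fun t v =>
      ENNReal.ofReal (t ^ (p - 1)) * (ENNReal.ofReal (Real.exp (-v)) * S.indicator 1 (t, v)))
      ((volume.restrict (Ioi (0:ℝ))).prod (volume.restrict (Ioi (0:ℝ)))) := by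
    apply Measurable.aemeasurable
    apply Measurable.mul
    · fun_prop
    · exact Measurable.mul ((measurable_snd.neg.exp).ennreal_ofReal)
        ((measurable_one.indicator hS))
  rw [lintegral_lintegral_swap hmeas]
  have step2 : ∫⁻ v in Ioi (0:ℝ), ∫⁻ t in Ioi (0:ℝ),
      ENNReal.ofReal (t ^ (p - 1)) * (ENNReal.ofReal (Real.exp (-v)) * S.indicator 1 (t, v))
      = ∫⁻ v in Ioi (0:ℝ),
          ENNReal.ofReal ((1/4 : ℝ) ^ p / p) * ENNReal.ofReal (Real.exp (-v) * v ^ (-p)) := by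
    refine setLIntegral_congr_fun measurableSet_Ioi (fun v hv => ?_)
    have hv : (0:ℝ) < v := hv
    have hc : (0:ℝ) < 1 / (4 * v) := by positivity
    have hpt : ∀ t, ENNReal.ofReal (t ^ (p - 1)) * (ENNReal.ofReal (Real.exp (-v)) *
        S.indicator 1 (t, v))
        = ENNReal.ofReal (Real.exp (-v)) *
            ((Iic (1 / (4 * v))).indicator (fun t => ENNReal.ofReal (t ^ (p - 1))) t) := by
      intro t
      rw [← key2 v hv t]
      ring
    rw [lintegral_congr hpt]
    rw [lintegral_const_mul' _ _ ENNReal.ofReal_ne_top]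
    rw [lintegral_indicator measurableSet_Iic, Measure.restrict_restrict measurableSet_Iic]
    rw [Set.Iic_inter_Ioi]
    rw [levy_aux_lintegral_rpow_Ioc hp0 hc]
    rw [← ENNReal.ofReal_mul (by positivity)]
    rw [← ENNReal.ofReal_mul (by positivity)]
    congr 1
    have h4v : (1 / (4 * v)) ^ p = (1/4 : ℝ) ^ p * v ^ (-p) := by
      rw [show (1 / (4 * v)) = (1/4) * v⁻¹ by field_simp]
      rw [Real.mul_rpow (by norm_num) (by positivity)]
      rw [← Real.rpow_neg_one v, ← Real.rpow_mul hv.le]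
      norm_num
    rw [h4v]
    ring
  rw [step2]
  rw [lintegral_const_mul' _ _ ENNReal.ofReal_ne_top]
  rw [levy_aux_lintegral_exp_rpow hp1]
  rw [← ENNReal.ofReal_mul (by positivity)]

end LevyAux

/-- For `d ≥ 1` and `1 < α < 2`, the integral
`∫_{ℝ^d} (1 − cos z₁)/|z|^{d+α} dz` is finite and equals
`π^{d/2}·|Γ(−α/2)| / (2^α · Γ((d+α)/2))`. -/
theorem levy_c0_value (d : ℕ) (hd : 0 < d) (α : ℝ) (hα1 : 1 < α) (hα2 : α < 2) :
    ∫⁻ z : EuclideanSpace ℝ (Fin d),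
        ENNReal.ofReal ((1 - Real.cos (z ⟨0, hd⟩)) / ‖z‖ ^ ((d : ℝ) + α))
      = ENNReal.ofReal
          (Real.pi ^ ((d : ℝ) / 2) * |Real.Gamma (-α / 2)|
            / (2 ^ α * Real.Gamma (((d : ℝ) + α) / 2))) := by
  have hdR : (0:ℝ) ≤ (d:ℝ) := Nat.cast_nonneg d
  set s : ℝ := ((d:ℝ) + α) / 2 with hs_def
  set p : ℝ := α / 2 with hp_def
  have hs : 0 < s := by rw [hs_def]; positivity
  have hp0 : 0 < p := by rw [hp_def]; linarith
  have hp1 : p < 1 := by rw [hp_def]; linarith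
  have hΓs : 0 < Real.Gamma s := Real.Gamma_pos_of_pos hs
  have hΓ1p : 0 < Real.Gamma (1 - p) := Real.Gamma_pos_of_pos (by linarith)
  set G : ℝ≥0∞ := ENNReal.ofReal (Real.Gamma s) with hG_def
  have hG0 : G ≠ 0 := by
    simp only [hG_def, ne_eq, ENNReal.ofReal_eq_zero, not_le]
    exact hΓs
  have hGt : G ≠ ⊤ := ENNReal.ofReal_ne_top
  -- Step 1: multiply by G and introduce the Gamma integral representation
  have step1 : ∀ z : EuclideanSpace ℝ (Fin d),
      ENNReal.ofReal ((1 - Real.cos (z ⟨0, hd⟩)) / ‖z‖ ^ ((d : ℝ) + α)) * G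
        = ∫⁻ t in Set.Ioi (0:ℝ),
            ENNReal.ofReal ((1 - Real.cos (z ⟨0, hd⟩)) *
              (t ^ (s - 1) * Real.exp (-(‖z‖ ^ 2 * t)))) := by
    intro z
    by_cases hz : z = (0 : EuclideanSpace ℝ (Fin d))
    · subst hz
      have h0 : ((0 : EuclideanSpace ℝ (Fin d)) ⟨0, hd⟩) = (0:ℝ) := rfl
      simp [h0]
    · have hz0 : (0:ℝ) < ‖z‖ := norm_pos_iff.2 hz
      have hr : (0:ℝ) < ‖z‖ ^ 2 := by positivity
      have hcos : (0:ℝ) ≤ 1 - Real.cos (z ⟨0, hd⟩) :=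
        sub_nonneg.2 (Real.cos_le_one _)
      have hRHS : ∫⁻ t in Set.Ioi (0:ℝ),
          ENNReal.ofReal ((1 - Real.cos (z ⟨0, hd⟩)) *
            (t ^ (s - 1) * Real.exp (-(‖z‖ ^ 2 * t))))
          = ENNReal.ofReal (1 - Real.cos (z ⟨0, hd⟩)) *
              ENNReal.ofReal ((1 / ‖z‖ ^ 2) ^ s * Real.Gamma s) := by
        rw [← levy_aux_lintegral_gammaKernel hs hr]
        rw [← lintegral_const_mul' _ _ ENNReal.ofReal_ne_top]
        refine lintegral_congr fun t => ?_
        rw [← ENNReal.ofReal_mul hcos]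
      rw [hRHS, hG_def, ← ENNReal.ofReal_mul hcos, ← ENNReal.ofReal_mul (by positivity)]
      congr 1
      have hpow : ((1:ℝ) / ‖z‖ ^ 2) ^ s = 1 / ‖z‖ ^ ((d:ℝ) + α) := by
        rw [one_div, one_div, ← Real.rpow_natCast ‖z‖ 2, ← Real.rpow_neg hz0.le,
          ← Real.rpow_mul hz0.le]
        rw [← Real.rpow_neg hz0.le]
        congr 1
        rw [hs_def]
        push_cast
        ring
      rw [hpow]
      field_simp
  have hInt : (∫⁻ z : EuclideanSpace ℝ (Fin d),
      ENNReal.ofReal ((1 - Real.cos (z ⟨0, hd⟩)) / ‖z‖ ^ ((d : ℝ) + α))) * G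
      = ∫⁻ z : EuclideanSpace ℝ (Fin d), ∫⁻ t in Set.Ioi (0:ℝ),
          ENNReal.ofReal ((1 - Real.cos (z ⟨0, hd⟩)) *
            (t ^ (s - 1) * Real.exp (-(‖z‖ ^ 2 * t)))) := by
    rw [← lintegral_mul_const' G _ hGt]
    exact lintegral_congr step1
  -- Step 2: Tonelli
  have hmeas : AEMeasurable (Function.uncurry fun (z : EuclideanSpace ℝ (Fin d)) (t : ℝ) =>
      ENNReal.ofReal ((1 - Real.cos (z ⟨0, hd⟩)) * (t ^ (s - 1) * Real.exp (-(‖z‖ ^ 2 * t)))))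
      ((volume : Measure (EuclideanSpace ℝ (Fin d))).prod (volume.restrict (Set.Ioi 0))) := by
    apply Measurable.aemeasurable
    fun_prop
  rw [lintegral_lintegral_swap hmeas] at hInt
  -- Step 3: compute the inner Gaussian integral for each t > 0
  have step3 : ∫⁻ t in Set.Ioi (0:ℝ), ∫⁻ z : EuclideanSpace ℝ (Fin d),
      ENNReal.ofReal ((1 - Real.cos (z ⟨0, hd⟩)) * (t ^ (s - 1) * Real.exp (-(‖z‖ ^ 2 * t))))
      = ∫⁻ t in Set.Ioi (0:ℝ), ENNReal.ofReal (π ^ ((d:ℝ)/2)) *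
          ENNReal.ofReal (t ^ (p - 1) * (1 - Real.exp (-(1 / (4 * t))))) := by
    refine setLIntegral_congr_fun measurableSet_Ioi (fun t ht => ?_)
    have ht : (0:ℝ) < t := ht
    have h1 : ∫⁻ z : EuclideanSpace ℝ (Fin d),
        ENNReal.ofReal ((1 - Real.cos (z ⟨0, hd⟩)) * (t ^ (s - 1) * Real.exp (-(‖z‖ ^ 2 * t))))
        = ENNReal.ofReal (t ^ (s - 1)) * ∫⁻ z : EuclideanSpace ℝ (Fin d),
            ENNReal.ofReal ((1 - Real.cos (z ⟨0, hd⟩)) * Real.exp (-(‖z‖ ^ 2 * t))) := by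
      rw [← lintegral_const_mul' _ _ ENNReal.ofReal_ne_top]
      refine lintegral_congr fun z => ?_
      have hcos : (0:ℝ) ≤ 1 - Real.cos (z ⟨0, hd⟩) := sub_nonneg.2 (Real.cos_le_one _)
      rw [← ENNReal.ofReal_mul (Real.rpow_nonneg ht.le _)]
      congr 1
      ring
    rw [h1]
    have h2 : ∫⁻ z : EuclideanSpace ℝ (Fin d),
        ENNReal.ofReal ((1 - Real.cos (z ⟨0, hd⟩)) * Real.exp (-(‖z‖ ^ 2 * t)))
        = ENNReal.ofReal ((π / t) ^ ((d:ℝ)/2) * (1 - Real.exp (-(1 / (4 * t))))) := by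
      rw [← levy_aux_gauss_value hd ht]
      rw [ofReal_integral_eq_lintegral_ofReal (levy_aux_integrable_gauss hd ht)]
      refine Filter.Eventually.of_forall fun z => ?_
      have hcos : (0:ℝ) ≤ 1 - Real.cos (z ⟨0, hd⟩) := sub_nonneg.2 (Real.cos_le_one _)
      positivity
    rw [h2]
    rw [← ENNReal.ofReal_mul (Real.rpow_nonneg ht.le _)]
    rw [← ENNReal.ofReal_mul (by positivity)]
    congr 1
    have hdiv : (π / t) ^ ((d:ℝ)/2) = π ^ ((d:ℝ)/2) / t ^ ((d:ℝ)/2) :=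
      Real.div_rpow pi_pos.le ht.le _
    have hts : t ^ (s - 1) / t ^ ((d:ℝ)/2) = t ^ (p - 1) := by
      rw [← Real.rpow_sub ht]
      congr 1
      rw [hs_def, hp_def]
      push_cast
      ring
    have hexp0 : (0:ℝ) ≤ 1 - Real.exp (-(1 / (4 * t))) := by
      have : Real.exp (-(1 / (4 * t))) ≤ 1 := by
        rw [Real.exp_le_one_iff]
        exact neg_nonpos.2 (by positivity)
      linarith
    calc t ^ (s - 1) * ((π / t) ^ ((d:ℝ)/2) * (1 - Real.exp (-(1 / (4 * t)))))
        = (t ^ (s - 1) / t ^ ((d:ℝ)/2)) * π ^ ((d:ℝ)/2) * (1 - Real.exp (-(1 / (4 * t)))) := by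
          rw [hdiv]; ring
      _ = π ^ ((d:ℝ)/2) * (t ^ (p - 1) * (1 - Real.exp (-(1 / (4 * t))))) := by
          rw [hts]; ring
  rw [step3] at hInt
  rw [lintegral_const_mul' _ _ ENNReal.ofReal_ne_top] at hInt
  rw [levy_aux_K hp0 hp1] at hInt
  -- Step 4: final arithmetic
  have habs : |Real.Gamma (-α / 2)| = Real.Gamma (1 - p) / p := by
    have hne : -p ≠ 0 := by linarith
    have hΓrec : Real.Gamma (-p + 1) = -p * Real.Gamma (-p) := Real.Gamma_add_one hne
    have h1p : Real.Gamma (1 - p) = -p * Real.Gamma (-p) := by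
      rw [show (1:ℝ) - p = -p + 1 by ring]
      exact hΓrec
    have hval : Real.Gamma (-α / 2) = -(Real.Gamma (1 - p) / p) := by
      rw [show -α / 2 = -p by rw [hp_def]; ring]
      rw [h1p]
      field_simp
    rw [hval, abs_neg, abs_of_pos (by positivity)]
  have h4p : ((1:ℝ)/4) ^ p = ((2:ℝ) ^ α)⁻¹ := by
    have h2 : ((1:ℝ)/4) = ((2:ℝ) ^ (2:ℝ))⁻¹ := by
      rw [show (2:ℝ) ^ (2:ℝ) = 4 by
        rw [show (2:ℝ) = ((2:ℕ):ℝ) by norm_num, Real.rpow_natCast]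
        norm_num]
      norm_num
    rw [h2, ← Real.rpow_neg_one ((2:ℝ) ^ (2:ℝ)), ← Real.rpow_mul (by positivity),
      ← Real.rpow_mul (by norm_num)]
    rw [← Real.rpow_neg_one ((2:ℝ) ^ α), ← Real.rpow_mul (by norm_num)]
    congr 1
    rw [hp_def]; ring
  -- assemble
  have hRG : ENNReal.ofReal
      (Real.pi ^ ((d : ℝ) / 2) * |Real.Gamma (-α / 2)| / (2 ^ α * Real.Gamma s)) * G
      = ENNReal.ofReal (π ^ ((d:ℝ)/2)) * ENNReal.ofReal ((1/4 : ℝ) ^ p / p *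
          Real.Gamma (1 - p)) := by
    rw [hG_def, ← ENNReal.ofReal_mul (by positivity), ← ENNReal.ofReal_mul (by positivity)]
    congr 1
    rw [habs, h4p]
    have h2α : (0:ℝ) < 2 ^ α := Real.rpow_pos_of_pos (by norm_num) α
    field_simp
  have h := hInt.trans hRG.symm
  have h2 := congrArg (· * G⁻¹) h
  simpa [mul_assoc, ENNReal.mul_inv_cancel hG0 hGt] using h2
end

section
/- If u : ℝ^d → ℂ is ℤ^d-periodic and measurable with u|_Ω ∈ L²(Ω) and a(0)[u,u] = 0, then there is a constant c ∈ ℂ such that u(x) = c for almost every x ∈ ℝ^d. -/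
open MeasureTheory Complex Filter
open scoped ENNReal Real

noncomputable section

namespace Levy

abbrev Rd (d : ℕ) := EuclideanSpace ℝ (Fin d)

def cell (d : ℕ) : Set (Rd d) := {x | ∀ i, 0 ≤ x i ∧ x i < 1}

def dualCell (d : ℕ) : Set (Rd d) := {ξ | ∀ i, -Real.pi ≤ ξ i ∧ ξ i < Real.pi}

def intVec (d : ℕ) (m : Fin d → ℤ) : Rd d := WithLp.toLp 2 (fun i => (m i : ℝ))

def IsPeriodic {d : ℕ} (u : Rd d → ℂ) : Prop :=
  ∀ (x : Rd d) (m : Fin d → ℤ), u (x + intVec d m) = u x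

def rinner {d : ℕ} (ξ x : Rd d) : ℝ := inner ℝ ξ x

def c0 (d : ℕ) (hd : 0 < d) (α : ℝ) : ℝ :=
  ∫ z : Rd d, (1 - Real.cos (z ⟨0, hd⟩)) / ‖z‖ ^ ((d : ℝ) + α)

/-- The quadratic form `a(ξ)[u,u]`, with values in `[0,∞]`
(inner integral in `x` over `Ω`, outer in `y` over `ℝ^d`). -/
def formA (d : ℕ) (α : ℝ) (μ : Rd d → Rd d → ℝ) (ξ : Rd d) (u : Rd d → ℂ) : ℝ≥0∞ :=
  (1/2 : ℝ≥0∞) * ∫⁻ y : Rd d, ∫⁻ x in cell d, ENNReal.ofReal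
    (μ x y * ‖Complex.exp (Complex.I * (rinner ξ x : ℂ)) * u x
        - Complex.exp (Complex.I * (rinner ξ y : ℂ)) * u y‖ ^ 2
      / ‖x - y‖ ^ ((d : ℝ) + α))

/-- If `u` is `ℤ^d`-periodic, measurable, `u|_Ω ∈ L²(Ω)` and
`a(0)[u,u] = 0`, then `u` is a.e. constant on `ℝ^d`. -/
theorem levy_kernel_constants (d : ℕ) (hd : 0 < d) (α : ℝ)
    (hα1 : 1 < α) (hα2 : α < 2)
    (μ : Rd d → Rd d → ℝ) (μm μp : ℝ)
    (hμmeas : Measurable fun p : Rd d × Rd d => μ p.1 p.2)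
    (hμm : 0 < μm) (hμbd : ∀ x y, μm ≤ μ x y ∧ μ x y ≤ μp)
    (hμsym : ∀ x y, μ x y = μ y x)
    (hμper : ∀ (x y : Rd d) (m n : Fin d → ℤ),
      μ (x + intVec d m) (y + intVec d n) = μ x y)
    (u : Rd d → ℂ) (humeas : Measurable u) (huper : IsPeriodic u)
    (huL2 : MemLp u 2 (volume.restrict (cell d)))
    (hzero : formA d α μ 0 u = 0) :
    ∃ c : ℂ, ∀ᵐ x : Rd d ∂volume, u x = c := by
  classical
  set ν : Measure (Rd d) := volume.restrict (cell d) with hνdef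
  have hexp : ∀ x : Rd d,
      Complex.exp (Complex.I * ((rinner (0 : Rd d) x : ℝ) : ℂ)) * u x = u x := by
    intro x
    simp [rinner, inner_zero_left]
  have hzero' : (∫⁻ y : Rd d, ∫⁻ x in cell d, ENNReal.ofReal
      (μ x y * ‖u x - u y‖ ^ 2 / ‖x - y‖ ^ ((d : ℝ) + α))) = 0 := by
    have h := hzero
    unfold formA at h
    simp only [hexp] at h
    rcases mul_eq_zero.1 h with h' | h'
    · norm_num at h'
    · exact h'
  set f : Rd d × Rd d → ℝ≥0∞ := fun p =>
    ENNReal.ofReal (μ p.2 p.1 * ‖u p.2 - u p.1‖ ^ 2 / ‖p.2 - p.1‖ ^ ((d : ℝ) + α))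
    with hfdef
  have hdα : (0 : ℝ) ≤ (d : ℝ) + α := by positivity
  have hfmeas : Measurable f := by
    apply ENNReal.measurable_ofReal.comp
    apply Measurable.div
    · exact (hμmeas.comp measurable_swap).mul
        (((humeas.comp measurable_snd).sub (humeas.comp measurable_fst)).norm.pow
          measurable_const)
    · exact (Real.continuous_rpow_const hdα).measurable.comp
        ((measurable_snd.sub measurable_fst).norm)
  have hprod : ∫⁻ p, f p ∂(volume.prod ν) = 0 := by
    rw [MeasureTheory.lintegral_prod f hfmeas.aemeasurable]
    exact hzero'
  have hae : ∀ᵐ p ∂(volume.prod ν), f p = 0 :=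
    (lintegral_eq_zero_iff hfmeas).1 hprod
  have hdiagmeas : MeasurableSet {p : Rd d × Rd d | p.2 = p.1} :=
    measurableSet_eq_fun measurable_snd measurable_fst
  have hdiag : (volume.prod ν) {p : Rd d × Rd d | p.2 = p.1} = 0 := by
    rw [Measure.prod_apply hdiagmeas]
    have hy : ∀ y : Rd d, ν (Prod.mk y ⁻¹' {p : Rd d × Rd d | p.2 = p.1}) = 0 := by
      intro y
      have hset : (Prod.mk y ⁻¹' {p : Rd d × Rd d | p.2 = p.1}) = {y} := by
        ext x; simp [Set.mem_preimage, eq_comm]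
      rw [hset, hνdef, Measure.restrict_apply (measurableSet_singleton y)]
      haveI : Nonempty (Fin d) := ⟨⟨0, hd⟩⟩
      refine le_antisymm (le_trans (measure_mono Set.inter_subset_left) ?_) zero_le
      simp [measure_singleton]
    rw [lintegral_congr hy]
    simp
  have hne : ∀ᵐ p ∂(volume.prod ν), p.2 ≠ p.1 := by
    rw [ae_iff]
    simpa using hdiag
  have haeq : ∀ᵐ p ∂(volume.prod ν), u p.2 = u p.1 := by
    filter_upwards [hae, hne] with p hp hpne
    rw [hfdef] at hp
    simp only at hp
    have hD : 0 < ‖p.2 - p.1‖ ^ ((d : ℝ) + α) :=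
      Real.rpow_pos_of_pos (norm_pos_iff.2 (sub_ne_zero.2 hpne)) _
    have hμpos : 0 < μ p.2 p.1 := lt_of_lt_of_le hμm (hμbd p.2 p.1).1
    have h0 : μ p.2 p.1 * ‖u p.2 - u p.1‖ ^ 2 / ‖p.2 - p.1‖ ^ ((d : ℝ) + α) ≤ 0 :=
      ENNReal.ofReal_eq_zero.1 hp
    have h1 : 0 ≤ μ p.2 p.1 * ‖u p.2 - u p.1‖ ^ 2 / ‖p.2 - p.1‖ ^ ((d : ℝ) + α) := by
      positivity
    have h2 : μ p.2 p.1 * ‖u p.2 - u p.1‖ ^ 2 = 0 :=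
      (div_eq_zero_iff.1 (le_antisymm h0 h1)).resolve_right hD.ne'
    have h3 : ‖u p.2 - u p.1‖ ^ 2 = 0 := (mul_eq_zero.1 h2).resolve_left hμpos.ne'
    have h4 : ‖u p.2 - u p.1‖ = 0 := by
      exact pow_eq_zero_iff (two_ne_zero) |>.1 h3
    exact sub_eq_zero.1 (norm_eq_zero.1 h4)
  have hAmeas : MeasurableSet {p : Rd d × Rd d | u p.2 = u p.1} :=
    measurableSet_eq_fun (humeas.comp measurable_snd) (humeas.comp measurable_fst)
  have haeq' : ∀ᵐ q ∂(ν.prod (volume : Measure (Rd d))), u q.1 = u q.2 := by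
    have hswap : Measure.map Prod.swap (ν.prod (volume : Measure (Rd d)))
        = (volume : Measure (Rd d)).prod ν := Measure.prod_swap
    have h := haeq
    rw [← hswap] at h
    have h2 := (ae_map_iff measurable_swap.aemeasurable hAmeas).1 h
    simpa using h2
  have hx : ∀ᵐ x ∂ν, ∀ᵐ y ∂(volume : Measure (Rd d)), u x = u y :=
    Measure.ae_ae_of_ae_prod haeq'
  -- the cell has positive measure
  have hcellpos : 0 < volume (cell d) := by
    set U : Set (Rd d) := {x | ∀ i, 0 < x i ∧ x i < 1} with hUdef
    have hUopen : IsOpen U := by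
      have hU : U = ⋂ i, (fun x : Rd d => x i) ⁻¹' Set.Ioo (0 : ℝ) 1 := by
        ext x
        simp [hUdef, Set.mem_iInter, Set.mem_Ioo]
      rw [hU]
      exact isOpen_iInter_of_finite fun i =>
        isOpen_Ioo.preimage (EuclideanSpace.proj (𝕜 := ℝ) i).continuous
    have hUne : U.Nonempty := by
      refine ⟨WithLp.toLp 2 (fun _ => (1 : ℝ) / 2 : Fin d → ℝ), fun i => ?_⟩
      norm_num
    have hUsub : U ⊆ cell d := fun x hx i => ⟨(hx i).1.le, (hx i).2⟩
    exact lt_of_lt_of_le (hUopen.measure_pos volume hUne) (measure_mono hUsub)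
  have hν0 : ν ≠ 0 := by
    intro h
    have : ν Set.univ = 0 := by rw [h]; simp
    rw [hνdef, Measure.restrict_apply_univ] at this
    exact hcellpos.ne' this
  haveI : (ae ν).NeBot := ae_neBot.2 hν0
  obtain ⟨x₀, hx₀⟩ := hx.exists
  exact ⟨u x₀, hx₀.mono fun y hy => hy.symm⟩

end Levy
end
end
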